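/- Let R be the commutative ring ℤ[ψ, Δ]/(ψ² − 1, ψΔ − Δ, Δ² − 1 − ψ) (the Tambara–Yamagami fusion ring of ℤ/2). Then there is no ring homomorphism φ : R → ℤ with φ(Δ) ≠ 0. In particular there is no ring homomorphism sending ψ to 1. -/
import Mathlib


open MvPolynomial

/-- The ideal of relations of the Tambara–Yamagami fusion ring of `ℤ/2`:
`ψ² = 1`, `ψΔ = Δ`, `Δ² = 1 + ψ`, where `ψ = X 0` and `Δ = X 1`. -/
noncomputable def tyIdeal : Ideal (MvPolynomial (Fin 2) ℤ) :=
  Ideal.span {X 0 ^ 2 - 1, X 0 * X 1 - X 1, X 1 ^ 2 - 1 - X 0}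

lemma sq_ne_two (b : ℤ) : b ^ 2 ≠ 2 := by
  intro h
  have h1 : b ≤ 1 := by nlinarith [sq_nonneg (b - 1)]
  have h2 : -1 ≤ b := by nlinarith [sq_nonneg (b + 1)]
  interval_cases b <;> omega

lemma ty_rel (φ : (MvPolynomial (Fin 2) ℤ ⧸ tyIdeal) →+* ℤ) :
    (φ (Ideal.Quotient.mk tyIdeal (X 0)))^2 = 1 ∧
    φ (Ideal.Quotient.mk tyIdeal (X 0)) * φ (Ideal.Quotient.mk tyIdeal (X 1))
      = φ (Ideal.Quotient.mk tyIdeal (X 1)) ∧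
    (φ (Ideal.Quotient.mk tyIdeal (X 1)))^2
      = 1 + φ (Ideal.Quotient.mk tyIdeal (X 0)) := by
  have h : ∀ p ∈ ({X 0 ^ 2 - 1, X 0 * X 1 - X 1, X 1 ^ 2 - 1 - X 0} :
      Set (MvPolynomial (Fin 2) ℤ)), φ (Ideal.Quotient.mk tyIdeal p) = 0 := by
    intro p hp
    have hz : Ideal.Quotient.mk tyIdeal p = 0 :=
      Ideal.Quotient.eq_zero_iff_mem.mpr (Ideal.subset_span hp)
    rw [hz, map_zero]
  have h1 := h (X 0 ^ 2 - 1) (by simp)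
  have h2 := h (X 0 * X 1 - X 1) (by simp)
  have h3 := h (X 1 ^ 2 - 1 - X 0) (by simp)
  simp only [map_sub, map_pow, map_mul, map_one, sub_eq_zero] at h1 h2 h3
  refine ⟨h1, h2, by linarith [h3]⟩

/-- In the Tambara–Yamagami fusion ring `R = ℤ[ψ,Δ]/(ψ²−1, ψΔ−Δ, Δ²−1−ψ)`,
there is no ring homomorphism `φ : R → ℤ` with `φ(Δ) ≠ 0`; in particular
there is no ring homomorphism sending `ψ` to `1`. -/
theorem tambaraYamagami_no_integer_fiber :
    (∀ φ : (MvPolynomial (Fin 2) ℤ ⧸ tyIdeal) →+* ℤ,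
        φ (Ideal.Quotient.mk tyIdeal (X 1)) = 0) ∧
    (¬ ∃ φ : (MvPolynomial (Fin 2) ℤ ⧸ tyIdeal) →+* ℤ,
        φ (Ideal.Quotient.mk tyIdeal (X 0)) = 1) := by
  constructor
  · intro φ
    obtain ⟨h1, h2, h3⟩ := ty_rel φ
    by_contra hb
    have ha : φ (Ideal.Quotient.mk tyIdeal (X 0)) = 1 :=
      mul_right_cancel₀ hb (by linarith [h2])
    rw [ha] at h3
    exact sq_ne_two _ (by linarith)
  · rintro ⟨φ, ha⟩
    obtain ⟨h1, h2, h3⟩ := ty_rel φ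
    rw [ha] at h3
    exact sq_ne_two _ (by linarith)
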